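/- The bracket {x,y} = (-1)^{|x|}Δ(x•y) − (-1)^{|x|}Δ(x)•y − x•Δ(y) on TA is graded anti-symmetric: {x,y} = −(-1)^{(|x|+1)(|y|+1)} {y,x}. -/

import Mathlib

open Finsupp

noncomputable section
open scoped Classical

/-- The sign `(-1)^k` for an integer `k`. -/
def sgn (k : ℤ) : ℤ := if Even k then 1 else -1

variable (R : Type*) [CommRing R]

/-- The underlying space of the tensor algebra of a graded module `A` with
homogeneous basis `B`: the free `R`-module on the set of words in `B`. -/
abbrev TA (B : Type*) := List B →₀ R

variable {R}
variable {B : Type*} (deg : B → ℤ)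

/-- The shifted degree `|a₁| + ⋯ + |aₙ| + n` of a monomial `a₁ ⊗ ⋯ ⊗ aₙ`. -/
def degList (l : List B) : ℤ := (l.map (fun b => deg b + 1)).sum

/-- An element of `TA` is homogeneous of (shifted) degree `p` if it is supported
on monomials of shifted degree `p`. -/
def IsHomog (x : TA R B) (p : ℤ) : Prop := ∀ l ∈ x.support, degList deg l = p

/-- `σ` is an `(n, N-n)`-shuffle: it is increasing on the first `n` and on the last
`N - n` positions. -/
def IsShuffle (n : ℕ) {N : ℕ} (σ : Equiv.Perm (Fin N)) : Prop :=
  ∀ i j : Fin N, i < j →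
    (((i : ℕ) < n ∧ (j : ℕ) < n) ∨ (n ≤ (i : ℕ) ∧ n ≤ (j : ℕ))) → σ i < σ j

/-- The word obtained by permuting the letters of `l` by `σ`; the letter at position `i`
of the result is `a_{σ⁻¹(i)}`. -/
def permList (l : List B) (σ : Equiv.Perm (Fin l.length)) : List B :=
  List.ofFn (fun i => l.get (σ⁻¹ i))

/-- The Koszul sign exponent of the permutation `σ` acting on the word `l`, with respect to
the shifted degrees: a factor `(|a_i|+1)(|a_j|+1)` for each transposed pair. -/
def koszul (l : List B) (σ : Equiv.Perm (Fin l.length)) : ℤ :=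
  ∑ p ∈ Finset.univ.filter
      (fun p : Fin l.length × Fin l.length => p.1 < p.2 ∧ σ p.2 < σ p.1),
    (deg (l.get p.1) + 1) * (deg (l.get p.2) + 1)

/-- The shuffle product of two monomials. -/
def shMulMono (l₁ l₂ : List B) : TA R B :=
  ∑ σ ∈ Finset.univ.filter
      (fun σ : Equiv.Perm (Fin (l₁ ++ l₂).length) => IsShuffle l₁.length σ),
    sgn (koszul deg (l₁ ++ l₂) σ) • Finsupp.single (permList (l₁ ++ l₂) σ) (1 : R)

/-- The shuffle product `• : TA ⊗ TA → TA`. -/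
def shMul (x y : TA R B) : TA R B :=
  x.sum fun l₁ c₁ => y.sum fun l₂ c₂ => (c₁ * c₂) • shMulMono deg l₁ l₂

/-- Replace the letter at position `i` of `l` by the element `x` of `A`, extended linearly. -/
def replaceAt (l : List B) (i : ℕ) (x : B →₀ R) : TA R B :=
  x.sum fun b c => Finsupp.single (l.set i b) c

/-- The coderivation extension to `TA` of a degree `+1` map `d_A : A → A`,
`d(a₁ ⊗ ⋯ ⊗ aₙ) = Σᵢ (-1)^{|a₁|+⋯+|a_{i-1}|+i-1} a₁ ⊗ ⋯ ⊗ d_A(aᵢ) ⊗ ⋯ ⊗ aₙ`. -/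
def dCoder (dA : B → (B →₀ R)) (x : TA R B) : TA R B :=
  x.sum fun l c => c •
    ∑ i : Fin l.length,
      sgn (((l.take i).map deg).sum + i) • replaceAt l i (dA (l.get i))

/-- Replace the two letters at positions `i, i+1` of `l` by the element `x` of `A`,
extended linearly. -/
def replace2At (l : List B) (i : ℕ) (x : B →₀ R) : TA R B :=
  x.sum fun b c => Finsupp.single (l.take i ++ b :: l.drop (i + 2)) c

/-- The coderivation extension to `TA` of a product `μ_A : A ⊗ A → A`,
`Δ(a₁ ⊗ ⋯ ⊗ aₙ) = Σᵢ (-1)^{|a₁|+⋯+|aᵢ|+i-1} a₁ ⊗ ⋯ ⊗ μ_A(aᵢ, a_{i+1}) ⊗ ⋯ ⊗ aₙ`. -/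
def deltaCoder (mu : B → B → (B →₀ R)) (x : TA R B) : TA R B :=
  x.sum fun l c => c •
    ∑ i : Fin (l.length - 1),
      sgn (((l.take (i + 1)).map deg).sum + i) •
        replace2At l i
          (mu (l.get ⟨i, by have := i.2; omega⟩) (l.get ⟨i + 1, by have := i.2; omega⟩))

/-- The linear extension to `A` of a map defined on the basis `B`. -/
def extLin (dA : B → (B →₀ R)) (x : B →₀ R) : B →₀ R := x.sum fun b c => c • dA b

/-- The bilinear extension to `A` of a product defined on the basis `B`. -/
def extBil (mu : B → B → (B →₀ R)) (x y : B →₀ R) : B →₀ R :=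
  x.sum fun a c => y.sum fun b c' => (c * c') • mu a b

/-- `d_A` is homogeneous of degree `+1`. -/
def DAHomog (dA : B → (B →₀ R)) : Prop :=
  ∀ b : B, ∀ b' ∈ (dA b).support, deg b' = deg b + 1

/-- `μ_A` is homogeneous of degree `0`. -/
def MuHomog (mu : B → B → (B →₀ R)) : Prop :=
  ∀ a b : B, ∀ c ∈ (mu a b).support, deg c = deg a + deg b

/-- The deviation `{x,y} = (-1)^{|x|} Δ(x•y) - (-1)^{|x|} Δ(x)•y - x•Δ(y)` of `Δ` from
being a derivation of the shuffle product, for `x` homogeneous of shifted degree `p`. -/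
def brTA (mu : B → B → (B →₀ R)) (p : ℤ) (x y : TA R B) : TA R B :=
  sgn p • deltaCoder deg mu (shMul deg x y)
    - sgn p • shMul deg (deltaCoder deg mu x) y
    - shMul deg x (deltaCoder deg mu y)

/-! Since `Δ` lowers the shifted degree by one, the claim reduces to graded commutativity of the
shuffle product, `x • y = (-1)^{|x||y|} y • x`, applied to `x • y`, `Δx • y` and `x • Δy`.
Commutativity comes from the bijection between `(n, m)`- and `(m, n)`-shuffles given by
precomposing with the swap of the two blocks of letters. The swapped shuffle inverts a pair of
letters exactly when either the original one inverts it or the pair crosses the two blocks, but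
not both; so modulo two the Koszul exponents differ by the sum over crossing pairs, `|x||y|`. -/

lemma sgn_add (a b : ℤ) : sgn (a + b) = sgn a * sgn b := by
  by_cases ha : Even a <;> by_cases hb : Even b <;> simp [sgn, Int.even_add, ha, hb]

lemma sgn_add_one (a : ℤ) : sgn (a + 1) = -sgn a := by
  by_cases h : Even a <;> simp [sgn, h]

lemma sgn_eq_of_even_sub {a b : ℤ} (h : Even (a - b)) : sgn a = sgn b := by
  have hab : Even a ↔ Even b := by
    simpa using (Int.even_sub (m := a) (n := b)).mp h
  simp only [sgn, hab]

lemma degList_append (l₁ l₂ : List B) :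
    degList deg (l₁ ++ l₂) = degList deg l₁ + degList deg l₂ := by
  simp [degList]

lemma degList_eq_sum (l : List B) :
    degList deg l = ∑ i : Fin l.length, (deg (l.get i) + 1) := by
  unfold degList
  conv_lhs => rw [← List.ofFn_get l, List.map_ofFn, List.sum_ofFn]
  rfl

lemma degList_cons (b : B) (l : List B) : degList deg (b :: l) = (deg b + 1) + degList deg l := by
  simp [degList]

lemma degList_take_append_cons_drop_two (l : List B) {i : ℕ} (hi : i + 1 < l.length) (b : B)
    (hb : deg b = deg l[i] + deg l[i + 1]) :
    degList deg (l.take i ++ b :: l.drop (i + 2)) = degList deg l - 1 := by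
  conv_rhs => rw [← List.take_append_drop i l, List.drop_eq_getElem_cons (by omega),
    List.drop_eq_getElem_cons hi]
  simp only [degList_append, degList_cons, hb]
  ring

lemma degList_take_eq_sum (l : List B) (k : ℕ) :
    degList deg (l.take k)
      = ∑ i ∈ Finset.univ.filter (fun i : Fin l.length => (i : ℕ) < k), (deg (l.get i) + 1) := by
  unfold degList
  conv_lhs => rw [List.map_take, ← List.ofFn_get l, List.map_ofFn, List.sum_take_ofFn]
  rfl

lemma degList_drop_eq_sum (l : List B) (k : ℕ) :
    degList deg (l.drop k)
      = ∑ i ∈ Finset.univ.filter (fun i : Fin l.length => k ≤ (i : ℕ)), (deg (l.get i) + 1) := by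
  have htotal : degList deg (l.take k) + degList deg (l.drop k) = degList deg l := by
    rw [← degList_append, List.take_append_drop]
  have hsplit := Finset.sum_filter_add_sum_filter_not Finset.univ
    (fun i : Fin l.length => (i : ℕ) < k) (fun i => deg (l.get i) + 1)
  simp only [not_lt] at hsplit
  rw [degList_take_eq_sum, degList_eq_sum deg l, ← hsplit] at htotal
  linarith

lemma sum_crossing_pairs_eq_degList_mul (l : List B) (k : ℕ) :
    ∑ p ∈ Finset.univ.filter (fun p : Fin l.length × Fin l.length => (p.1 : ℕ) < k ∧ k ≤ (p.2 : ℕ)),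
        (deg (l.get p.1) + 1) * (deg (l.get p.2) + 1)
      = degList deg (l.take k) * degList deg (l.drop k) := by
  rw [degList_take_eq_sum, degList_drop_eq_sum, Finset.sum_mul_sum, ← Finset.sum_product',
    ← Finset.filter_product, Finset.univ_product_univ]

section Homogeneity

variable {deg}

lemma IsHomog.sum {ι : Type*} (s : Finset ι) {f : ι → TA R B} {p : ℤ}
    (h : ∀ i ∈ s, IsHomog deg (f i) p) : IsHomog deg (∑ i ∈ s, f i) p := fun l hl => by
  obtain ⟨i, hi, hl⟩ := Finset.mem_biUnion.mp (Finsupp.support_finsetSum hl)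
  exact h i hi l hl

lemma IsHomog.smul {S : Type*} [SMulZeroClass S R] {x : TA R B} {p : ℤ} (h : IsHomog deg x p)
    (c : S) : IsHomog deg (c • x) p :=
  fun l hl => h l (Finsupp.support_smul hl)

lemma isHomog_replace2At (l : List B) {i : ℕ} (hi : i + 1 < l.length) (m : B →₀ R)
    (hm : ∀ b ∈ m.support, deg b = deg l[i] + deg l[i + 1]) :
    IsHomog deg (replace2At l i m) (degList deg l - 1) :=
  IsHomog.sum _ fun b hb l' hl' => by
    rw [Finset.mem_singleton.mp (Finsupp.support_single_subset hl'),
      degList_take_append_cons_drop_two deg l hi b (hm b hb)]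

lemma IsHomog.deltaCoder {mu : B → B → (B →₀ R)} (hmu : MuHomog deg mu) {p : ℤ} {x : TA R B}
    (hx : IsHomog deg x p) : IsHomog deg (deltaCoder deg mu x) (p - 1) := by
  refine IsHomog.sum _ fun l hl => IsHomog.smul (IsHomog.sum _ fun i _ => IsHomog.smul ?_ _) _
  rw [← hx l hl]
  exact isHomog_replace2At l (by omega) _ (hmu _ _)

end Homogeneity

lemma deltaCoder_smul {S : Type*} [Monoid S] [DistribMulAction S R] [IsScalarTower S R R]
    (mu : B → B → (B →₀ R)) (c : S) (x : TA R B) :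
    deltaCoder deg mu (c • x) = c • deltaCoder deg mu x := by
  rw [deltaCoder, deltaCoder, Finsupp.smul_sum, Finsupp.sum_smul_index']
  · exact Finsupp.sum_congr fun l _ => smul_assoc _ _ _
  · intro l
    simp

section InversionSums

variable {α β γ : Type*} [LinearOrder α] [LinearOrder β] [LinearOrder γ] [Fintype α] [Fintype β]

lemma sum_eq_sum_lt_add_swap {M : Type*} [AddCommMonoid M] (f : α × α → M)
    (hf : ∀ a, f (a, a) = 0) :
    ∑ p, f p = ∑ p ∈ Finset.univ.filter (fun p : α × α => p.1 < p.2), (f p + f p.swap) := by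
  have hsplit : ∀ p : α × α,
      f p = (if p.1 < p.2 then f p else 0) + (if p.2 < p.1 then f p else 0) := by
    rintro ⟨a, b⟩
    rcases lt_trichotomy a b with h | rfl | h
    · simp [h, h.not_gt]
    · simp [hf]
    · simp [h, h.not_gt]
  have hswap : ∑ p : α × α, (if p.2 < p.1 then f p else 0)
      = ∑ p : α × α, (if p.1 < p.2 then f p.swap else 0) :=
    ((Equiv.prodComm α α).sum_comp fun p => if p.2 < p.1 then f p else 0).symm
  rw [Fintype.sum_congr _ _ hsplit, Finset.sum_add_distrib, hswap, ← Finset.sum_add_distrib,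
    Finset.sum_filter]
  exact Fintype.sum_congr _ _ fun p => by split_ifs <;> simp

lemma sum_inversions_comp_equiv {M : Type*} [CommSemiring M] (e : α ≃ β) (σ : β → γ)
    (hσ : Function.Injective σ) (w : β → M) :
    ∑ q ∈ Finset.univ.filter (fun q : α × α => q.1 < q.2 ∧ σ (e q.2) < σ (e q.1)),
        w (e q.1) * w (e q.2)
      = ∑ p ∈ Finset.univ.filter (fun p : β × β =>
            p.1 < p.2 ∧ Xor (σ p.2 < σ p.1) (e.symm p.2 < e.symm p.1)),
          w p.1 * w p.2 := by
  let f : β × β → M := fun p => if e.symm p.1 < e.symm p.2 ∧ σ p.2 < σ p.1 then w p.1 * w p.2 else 0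
  have hreindex : ∑ q ∈ Finset.univ.filter (fun q : α × α => q.1 < q.2 ∧ σ (e q.2) < σ (e q.1)),
      w (e q.1) * w (e q.2) = ∑ p, f p := by
    rw [Finset.sum_filter, ← (e.prodCongr e).sum_comp]
    simp [f]
  rw [hreindex, sum_eq_sum_lt_add_swap f (fun a => by simp [f]), Finset.sum_filter,
    Finset.sum_filter]
  refine Fintype.sum_congr _ _ fun p => ?_
  by_cases hp : p.1 < p.2
  · have he : e.symm p.1 ≠ e.symm p.2 := e.symm.injective.ne hp.ne
    have hσp : σ p.1 ≠ σ p.2 := hσ.ne hp.ne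
    simp only [f, Prod.fst_swap, Prod.snd_swap, if_pos hp, mul_comm (w p.2)]
    rcases he.lt_or_gt with he | he <;> rcases hσp.lt_or_gt with hs | hs <;>
      simp [he, hs, he.not_gt, hs.not_gt, hp.not_ge, Xor]
  · simp [hp]

end InversionSums

lemma even_sum_filter_xor_sub {ι : Type*} (s : Finset ι) (P Q : ι → Prop) [DecidablePred P]
    [DecidablePred Q] (f : ι → ℤ) :
    Even (∑ i ∈ s.filter (fun i => Xor (P i) (Q i)), f i
      - (∑ i ∈ s.filter P, f i + ∑ i ∈ s.filter Q, f i)) := by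
  simp only [Finset.sum_filter, ← Finset.sum_add_distrib, ← Finset.sum_sub_distrib]
  refine Finset.even_sum _ fun i _ => ?_
  by_cases hP : P i <;> by_cases hQ : Q i <;> simp [hP, hQ, Xor]

section SwapBlocks

variable (l₁ l₂ : List B)

def swapBlocks : Fin (l₂ ++ l₁).length ≃ Fin (l₁ ++ l₂).length where
  toFun p := ⟨if (p : ℕ) < l₂.length then p + l₁.length else p - l₂.length, by
    have := p.2; simp only [List.length_append] at *; split <;> omega⟩
  invFun q := ⟨if (q : ℕ) < l₁.length then q + l₂.length else q - l₁.length, by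
    have := q.2; simp only [List.length_append] at *; split <;> omega⟩
  left_inv p := by
    have := p.2; simp only [List.length_append] at this
    ext; simp only; split_ifs <;> omega
  right_inv q := by
    have := q.2; simp only [List.length_append] at this
    ext; simp only; split_ifs <;> omega

lemma swapBlocks_val (p : Fin (l₂ ++ l₁).length) :
    (swapBlocks l₁ l₂ p : ℕ) = if (p : ℕ) < l₂.length then p + l₁.length else p - l₂.length :=
  rfl

lemma swapBlocks_symm : (swapBlocks l₁ l₂).symm = swapBlocks l₂ l₁ := rfl

lemma get_swapBlocks (p : Fin (l₂ ++ l₁).length) :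
    (l₁ ++ l₂).get (swapBlocks l₁ l₂ p) = (l₂ ++ l₁).get p := by
  have hp := p.2
  simp only [List.length_append] at hp
  simp only [List.get_eq_getElem, List.getElem_append, swapBlocks_val]
  split_ifs <;> first | omega | rfl | (congr 1; omega)

lemma swapBlocks_lt_swapBlocks_iff {p p' : Fin (l₂ ++ l₁).length} (h : p < p') :
    swapBlocks l₁ l₂ p' < swapBlocks l₁ l₂ p ↔ (p : ℕ) < l₂.length ∧ l₂.length ≤ (p' : ℕ) := by
  have hp := p'.2
  rw [Fin.lt_def] at h ⊢
  simp only [List.length_append] at hp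
  rw [swapBlocks_val, swapBlocks_val]
  split_ifs <;> omega

lemma length_append_comm : (l₁ ++ l₂).length = (l₂ ++ l₁).length := by
  simp [Nat.add_comm]

def swapBlocksPerm (σ : Equiv.Perm (Fin (l₁ ++ l₂).length)) :
    Equiv.Perm (Fin (l₂ ++ l₁).length) :=
  ((swapBlocks l₁ l₂).trans σ).trans (finCongr (length_append_comm l₁ l₂))

variable {l₁ l₂}

lemma swapBlocksPerm_val (σ : Equiv.Perm (Fin (l₁ ++ l₂).length)) (p : Fin (l₂ ++ l₁).length) :
    (swapBlocksPerm l₁ l₂ σ p : ℕ) = σ (swapBlocks l₁ l₂ p) :=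
  rfl

lemma swapBlocksPerm_swapBlocksPerm (σ : Equiv.Perm (Fin (l₁ ++ l₂).length)) :
    swapBlocksPerm l₂ l₁ (swapBlocksPerm l₁ l₂ σ) = σ := by
  ext p
  rw [swapBlocksPerm_val, swapBlocksPerm_val, ← swapBlocks_symm, Equiv.symm_apply_apply]

lemma IsShuffle.swapBlocksPerm {σ : Equiv.Perm (Fin (l₁ ++ l₂).length)}
    (hσ : IsShuffle l₁.length σ) : IsShuffle l₂.length (swapBlocksPerm l₁ l₂ σ) := by
  intro i j hij hblock
  have hj := j.2
  simp only [List.length_append] at hj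
  rw [Fin.lt_def] at hij ⊢
  rw [swapBlocksPerm_val, swapBlocksPerm_val, ← Fin.lt_def]
  refine hσ _ _ ?_ ?_ <;> simp only [Fin.lt_def, swapBlocks_val] <;> split_ifs <;> omega

lemma swapBlocks_swapBlocksPerm_inv (σ : Equiv.Perm (Fin (l₁ ++ l₂).length))
    (q : Fin (l₂ ++ l₁).length) :
    swapBlocks l₁ l₂ ((swapBlocksPerm l₁ l₂ σ)⁻¹ q)
      = σ⁻¹ ((finCongr (length_append_comm l₁ l₂)).symm q) := by
  rw [Equiv.Perm.inv_def, swapBlocksPerm, Equiv.symm_trans_apply, Equiv.symm_trans_apply,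
    Equiv.apply_symm_apply]
  rfl

lemma permList_swapBlocksPerm (σ : Equiv.Perm (Fin (l₁ ++ l₂).length)) :
    permList (l₂ ++ l₁) (swapBlocksPerm l₁ l₂ σ) = permList (l₁ ++ l₂) σ := by
  apply List.ext_getElem
  · simp [permList, length_append_comm l₂ l₁]
  intro k h₁ h₂
  simp only [permList, List.getElem_ofFn]
  rw [← get_swapBlocks l₁ l₂, swapBlocks_swapBlocksPerm_inv]
  rfl

end SwapBlocks

lemma koszul_swapBlocksPerm (l₁ l₂ : List B) (σ : Equiv.Perm (Fin (l₁ ++ l₂).length)) :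
    koszul deg (l₂ ++ l₁) (swapBlocksPerm l₁ l₂ σ)
      = ∑ p ∈ (Finset.univ.filter (fun p : Fin (l₁ ++ l₂).length × Fin (l₁ ++ l₂).length =>
            p.1 < p.2)).filter
            (fun p => Xor (σ p.2 < σ p.1) ((p.1 : ℕ) < l₁.length ∧ l₁.length ≤ (p.2 : ℕ))),
          (deg ((l₁ ++ l₂).get p.1) + 1) * (deg ((l₁ ++ l₂).get p.2) + 1) := by
  have h := sum_inversions_comp_equiv (swapBlocks l₁ l₂)
    (σ.trans (finCongr (length_append_comm l₁ l₂))) (Equiv.injective _)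
    (fun i => deg ((l₁ ++ l₂).get i) + 1)
  simp only [get_swapBlocks] at h
  rw [koszul, Finset.filter_filter]
  refine h.trans (Finset.sum_congr (Finset.filter_congr fun p _ => ?_) fun _ _ => rfl)
  refine and_congr_right fun hp => ?_
  rw [swapBlocks_symm, swapBlocks_lt_swapBlocks_iff l₂ l₁ hp]
  rfl

lemma sgn_koszul_swapBlocksPerm (l₁ l₂ : List B) (σ : Equiv.Perm (Fin (l₁ ++ l₂).length)) :
    sgn (koszul deg (l₂ ++ l₁) (swapBlocksPerm l₁ l₂ σ))
      = sgn (degList deg l₁ * degList deg l₂) * sgn (koszul deg (l₁ ++ l₂) σ) := by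
  have hcross : ∑ p ∈ (Finset.univ.filter
        (fun p : Fin (l₁ ++ l₂).length × Fin (l₁ ++ l₂).length => p.1 < p.2)).filter
        (fun p => (p.1 : ℕ) < l₁.length ∧ l₁.length ≤ (p.2 : ℕ)),
        (deg ((l₁ ++ l₂).get p.1) + 1) * (deg ((l₁ ++ l₂).get p.2) + 1)
      = degList deg l₁ * degList deg l₂ := by
    have h := sum_crossing_pairs_eq_degList_mul deg (l₁ ++ l₂) l₁.length
    rw [List.take_left, List.drop_left] at h
    rw [← h, Finset.filter_filter]
    refine Finset.sum_congr (Finset.filter_congr fun p _ => ?_) fun _ _ => rfl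
    exact and_iff_right_of_imp fun h => Fin.lt_def.mpr (by omega)
  rw [← sgn_add]
  apply sgn_eq_of_even_sub
  rw [koszul_swapBlocksPerm, ← hcross, koszul, add_comm]
  convert even_sum_filter_xor_sub _ (fun p : Fin _ × Fin _ => σ p.2 < σ p.1) _ _ using 4
  exact (Finset.filter_filter _ _ _).symm

lemma shMulMono_comm (l₁ l₂ : List B) :
    shMulMono (R := R) deg l₂ l₁ = sgn (degList deg l₁ * degList deg l₂) • shMulMono deg l₁ l₂ := by
  symm
  rw [shMulMono, shMulMono, Finset.smul_sum]
  refine Finset.sum_nbij' (swapBlocksPerm l₁ l₂) (swapBlocksPerm l₂ l₁) ?_ ?_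
    (fun σ _ => swapBlocksPerm_swapBlocksPerm σ) (fun τ _ => swapBlocksPerm_swapBlocksPerm τ) ?_
  · simpa using fun σ => IsShuffle.swapBlocksPerm (σ := σ)
  · simpa using fun τ => IsShuffle.swapBlocksPerm (σ := τ)
  · intro σ _
    rw [sgn_koszul_swapBlocksPerm, permList_swapBlocksPerm, mul_smul]

lemma shMul_comm {p q : ℤ} {x y : TA R B} (hx : IsHomog deg x p) (hy : IsHomog deg y q) :
    shMul deg x y = sgn (p * q) • shMul deg y x := by
  rw [shMul, shMul, Finsupp.smul_sum, Finsupp.sum_comm]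
  refine Finsupp.sum_congr fun l₂ hl₂ => ?_
  rw [Finsupp.smul_sum]
  refine Finsupp.sum_congr fun l₁ hl₁ => ?_
  rw [shMulMono_comm deg l₂ l₁, hx l₁ hl₁, hy l₂ hl₂, mul_comm q p, mul_comm (y l₂) (x l₁)]
  exact smul_comm _ _ _

/-- The bracket `{x,y} = (-1)^{|x|}Δ(x•y) − (-1)^{|x|}Δ(x)•y − x•Δ(y)`
on `TA` is graded anti-symmetric: `{x,y} = −(-1)^{(|x|+1)(|y|+1)} {y,x}`. -/
theorem bracket_antisymm (mu : B → B → (B →₀ R)) (hmdeg : MuHomog deg mu)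
    (p q : ℤ) (x y : TA R B) (hx : IsHomog deg x p) (hy : IsHomog deg y q) :
    brTA deg mu p x y = -sgn ((p + 1) * (q + 1)) • brTA deg mu q y x := by
  have e₁ : sgn p * sgn (p * q) = -(sgn ((p + 1) * (q + 1)) * sgn q) := by
    rw [← sgn_add, ← sgn_add, ← sgn_add_one]
    exact sgn_eq_of_even_sub ⟨-q - 1, by ring⟩
  have e₂ : sgn p * sgn ((p - 1) * q) = -sgn ((p + 1) * (q + 1)) := by
    rw [← sgn_add, ← sgn_add_one]
    exact sgn_eq_of_even_sub ⟨-q - 1, by ring⟩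
  have e₃ : sgn (p * (q - 1)) = -(sgn ((p + 1) * (q + 1)) * sgn q) := by
    rw [← sgn_add, ← sgn_add_one]
    exact sgn_eq_of_even_sub ⟨-p - q - 1, by ring⟩
  rw [brTA, brTA, shMul_comm deg hx hy, deltaCoder_smul,
    shMul_comm deg (hx.deltaCoder hmdeg) hy, shMul_comm deg hx (hy.deltaCoder hmdeg)]
  simp only [smul_sub, smul_smul, e₁, e₂, e₃]
  module

end
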